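/- Two-group model: fix p ∈ (0,1], θ ≠ 0, λ ∈ (0,1], and ε > 0, and let (J_m)_{m≥1} be i.i.d. Bernoulli(p) random variables and (ξ_m)_{m≥1} i.i.d. standard normal random variables independent of the J's; set Y_m = λ²θJ_m + λξ_m. Let h_{m,M} be as follows: with A = Φ(ε/λ) − Φ(−ε/λ), p̂_M = 1 − (1/(M·A))·Σ_{k=1}^M 1{−ε ≤ Y_k ≤ ε}, Ȳ_M, S²_M the sample mean and sample variance of Y_1,…,Y_M, θ̂_M = Ȳ_M/(λ²·p̂_M), τ̂²_M = max{(S²_M − λ² − Ȳ_M²·(1 − p̂_M)/p̂_M)/(p̂_M·λ⁴), 0}, set h_{m,M} = Φ(−(Y_m·τ̂²_M + θ̂_M)/√(τ̂²_M·(λ²·τ̂²_M + 1))) if τ̂²_M > 0 and h_{m,M} = 1{θ̂_M ≤ 0} if τ̂²_M = 0. Fix an index m with J_m = 1 almost surely (i.e., consider a coordinate with mean shift θ), and let Z : Ω → ℝ be a random variable, independent of all the Y's, whose law is normal with mean √(1−λ²)·θ and variance 1. Define the ℝ≥0∞-valued compound p-value P_M = min{Φ(Z)/h_{m,M}, (1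 − Φ(Z))/(1 − h_{m,M})} and the Oracle p-value P^{or} = min{Φ(Z)/1{θ ≤ 0}, (1 − Φ(Z))/(1 − 1{θ ≤ 0})}, where division is taken in the extended nonnegative reals so that a/0 = ∞ for a > 0. Then the law of P_M converges weakly to the law of P^{or} as M → ∞ (convergence in distribution). -/

import Mathlib

open Set MeasureTheory ProbabilityTheory Filter Real
open scoped ENNReal

noncomputable def Phi (x : ℝ) : ℝ :=
  ((ProbabilityTheory.gaussianReal 0 1) (Set.Iic x)).toReal

namespace CPAux

noncomputable def phi (x : ℝ) : ℝ := gaussianPDFReal 0 1 x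

lemma sqrt2pi_pos : 0 < Real.sqrt (2 * π) := Real.sqrt_pos.2 (by positivity)

lemma phi_def (x : ℝ) : phi x = (Real.sqrt (2 * π))⁻¹ * rexp (-x ^ 2 / 2) := by
  simp [phi, gaussianPDFReal]

lemma phi_pos (x : ℝ) : 0 < phi x := gaussianPDFReal_pos 0 1 x one_ne_zero

lemma continuous_phi : Continuous phi := by
  rw [show phi = fun x => (Real.sqrt (2 * π))⁻¹ * rexp (-x ^ 2 / 2) from funext phi_def]
  fun_prop

lemma integrable_phi : Integrable phi := integrable_gaussianPDFReal 0 1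

lemma phi_even (x : ℝ) : phi (-x) = phi x := by simp [phi_def]

lemma phi_lt_phi {u v : ℝ} (h : |u| < v) : phi v < phi u := by
  rw [phi_def, phi_def]
  have h2 : u ^ 2 < v ^ 2 := by nlinarith [sq_abs u, abs_nonneg u]
  have hexp : rexp (-v ^ 2 / 2) < rexp (-u ^ 2 / 2) := Real.exp_lt_exp.2 (by linarith)
  have hc : (0:ℝ) < (Real.sqrt (2 * π))⁻¹ := by positivity
  exact (mul_lt_mul_iff_right₀ hc).2 hexp

lemma gauss_Iic (x : ℝ) :
    (gaussianReal 0 1) (Iic x) = ENNReal.ofReal (∫ t in Iic x, phi t) :=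
  gaussianReal_apply_eq_integral 0 one_ne_zero (Iic x)

lemma Phi_eq_integral (x : ℝ) : Phi x = ∫ t in Iic x, phi t := by
  rw [Phi, gauss_Iic, ENNReal.toReal_ofReal]
  exact setIntegral_nonneg measurableSet_Iic fun t _ => (phi_pos t).le

lemma Phi_sub_Phi {a b : ℝ} (hab : a ≤ b) :
    Phi b - Phi a = ∫ t in a..b, phi t := by
  rw [Phi_eq_integral, Phi_eq_integral, intervalIntegral.integral_of_le hab]
  have : Iic b = Iic a ∪ Ioc a b := (Set.Iic_union_Ioc_eq_Iic hab).symm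
  rw [this, setIntegral_union (Set.Iic_disjoint_Ioc le_rfl) measurableSet_Ioc
    integrable_phi.integrableOn integrable_phi.integrableOn]
  ring

lemma Phi_intervalIntegral (a b : ℝ) : Phi b - Phi a = ∫ t in a..b, phi t := by
  rcases le_total a b with h | h
  · exact Phi_sub_Phi h
  · rw [intervalIntegral.integral_symm, ← Phi_sub_Phi h]; ring

lemma hasDerivAt_Phi (x : ℝ) : HasDerivAt Phi (phi x) x := by
  have key : HasDerivAt (fun u => ∫ t in (0:ℝ)..u, phi t) (phi x) x := by
    apply intervalIntegral.integral_hasDerivAt_right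
      integrable_phi.intervalIntegrable
      (continuous_phi.stronglyMeasurableAtFilter _ _)
      continuous_phi.continuousAt
  have : Phi = fun u => Phi 0 + ∫ t in (0:ℝ)..u, phi t := by
    funext u; rw [← Phi_intervalIntegral 0 u]; ring
  rw [this]
  simpa using key.const_add (Phi 0)

lemma continuous_Phi : Continuous Phi :=
  continuous_iff_continuousAt.2 fun x => (hasDerivAt_Phi x).continuousAt

lemma strictMono_Phi : StrictMono Phi := by
  intro a b hab
  have : 0 < ∫ t in a..b, phi t :=
    intervalIntegral.intervalIntegral_pos_of_pos_on
      integrable_phi.intervalIntegrable (fun t _ => phi_pos t) hab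
  have h := Phi_sub_Phi hab.le
  linarith [h ▸ this]

lemma Phi_nonneg (x : ℝ) : 0 ≤ Phi x := ENNReal.toReal_nonneg

lemma Phi_le_one (x : ℝ) : Phi x ≤ 1 := by
  rw [Phi]
  have h := prob_le_one (μ := gaussianReal 0 1) (s := Iic x)
  exact ENNReal.toReal_le_of_le_ofReal one_pos.le (by simpa using h)

lemma Phi_pos (x : ℝ) : 0 < Phi x :=
  lt_of_le_of_lt (Phi_nonneg (x - 1)) (strictMono_Phi (by linarith))

lemma Phi_lt_one (x : ℝ) : Phi x < 1 :=
  lt_of_lt_of_le (strictMono_Phi (show x < x + 1 by linarith)) (Phi_le_one (x + 1))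

lemma tendsto_Phi_atTop : Tendsto Phi atTop (nhds 1) := by
  have h := tendsto_measure_Iic_atTop (gaussianReal 0 1)
  have h2 : Tendsto (fun x => ((gaussianReal 0 1) (Iic x)).toReal) atTop
      (nhds ((1 : ℝ≥0∞)).toReal) := by
    apply (ENNReal.tendsto_toReal (by simp)).comp
    simpa using h
  rw [show Phi = fun x => ((gaussianReal 0 1) (Iic x)).toReal from rfl]
  simpa using h2

lemma gauss_singleton (x : ℝ) : (gaussianReal 0 1) {x} = 0 :=
  gaussianReal_absolutelyContinuous 0 one_ne_zero (volume_singleton)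

lemma Phi_neg (x : ℝ) : Phi (-x) = 1 - Phi x := by
  have hmap : (gaussianReal 0 1).map (fun y => (-1 : ℝ) * y) = gaussianReal 0 1 := by
    have := gaussianReal_map_const_mul (μ := 0) (v := 1) (-1 : ℝ)
    simpa using this
  have hIic : (gaussianReal 0 1) (Iic (-x)) = (gaussianReal 0 1) (Ici x) := by
    conv_rhs => rw [← hmap]
    rw [Measure.map_apply (by fun_prop) measurableSet_Ici]
    congr 1
    ext y
    simp
  have hIoi : (gaussianReal 0 1) (Ici x) = (gaussianReal 0 1) (Ioi x) :=
    (measure_congr (Ioi_ae_eq_Ici' (gauss_singleton x))).symm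
  have hcompl : (gaussianReal 0 1) (Ioi x) = 1 - (gaussianReal 0 1) (Iic x) := by
    have := measure_compl (μ := gaussianReal 0 1) (measurableSet_Iic (a := x)) (measure_ne_top _ _)
    simpa [compl_Iic] using this
  have hle : (gaussianReal 0 1) (Iic x) ≤ 1 := prob_le_one
  rw [Phi, Phi, hIic, hIoi, hcompl, ENNReal.toReal_sub_of_le hle (by simp)]
  simp

lemma tendsto_Phi_atBot : Tendsto Phi atBot (nhds 0) := by
  have h : Tendsto (fun x : ℝ => 1 - Phi (-x)) atBot (nhds 0) := by
    have hneg : Tendsto (fun x : ℝ => -x) atBot atTop := tendsto_neg_atBot_atTop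
    have := (tendsto_Phi_atTop.comp hneg).const_sub 1
    simpa using this
  refine h.congr fun x => ?_
  rw [Phi_neg]; ring

lemma exparg (x : ℝ) : -(1/2 : ℝ) * x ^ 2 = -x ^ 2 / 2 := by ring

lemma gauss_Icc {a b : ℝ} (hab : a ≤ b) :
    ((gaussianReal 0 1) (Icc a b)).toReal = Phi b - Phi a := by
  rw [gaussianReal_apply_eq_integral 0 one_ne_zero, ENNReal.toReal_ofReal
    (setIntegral_nonneg measurableSet_Icc fun t _ => gaussianPDFReal_nonneg 0 1 t)]
  rw [Phi_sub_Phi hab, intervalIntegral.integral_of_le hab,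
    ← integral_Icc_eq_integral_Ioc]
  rfl

/-- Gaussian mass of a shifted interval is strictly smaller than the centered one. -/
lemma shifted_mass_lt {a c : ℝ} (ha : 0 < a) (hc : c ≠ 0) :
    Phi (a - c) - Phi (-a - c) < Phi a - Phi (-a) := by
  set F : ℝ → ℝ := fun t => Phi (a - t) - Phi (-a - t) with hF
  have hderiv : ∀ t, HasDerivAt F (-phi (a - t) + phi (a + t)) t := by
    intro t
    have h1 : HasDerivAt (fun t : ℝ => Phi (a - t)) (-phi (a - t)) t := by
      have := (hasDerivAt_Phi (a - t)).comp t ((hasDerivAt_id t).const_sub a)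
      simpa [Function.comp_def] using this
    have h2 : HasDerivAt (fun t : ℝ => Phi (-a - t)) (-phi (-a - t)) t := by
      have := (hasDerivAt_Phi (-a - t)).comp t ((hasDerivAt_id t).const_sub (-a))
      simpa [Function.comp_def] using this
    have := h1.sub h2
    have heq : -phi (a - t) - -phi (-a - t) = -phi (a - t) + phi (a + t) := by
      rw [show -a - t = -(a + t) by ring, phi_even]; ring
    rw [heq] at this
    exact this
  have hanti : StrictAntiOn F (Ici 0) := by
    apply strictAntiOn_of_deriv_neg (convex_Ici 0)
    · exact Continuous.continuousOn (by
        refine continuous_iff_continuousAt.2 fun t => (hderiv t).continuousAt)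
    · intro t ht
      rw [interior_Ici] at ht
      rw [(hderiv t).deriv]
      have : phi (a + t) < phi (a - t) := by
        apply phi_lt_phi
        rw [abs_lt]
        constructor <;> [linarith; linarith [mem_Ioi.mp ht]]
      linarith
  have key : ∀ c' : ℝ, 0 < c' → Phi (a - c') - Phi (-a - c') < Phi a - Phi (-a) := by
    intro c' hc'
    have h := hanti (self_mem_Ici) (le_of_lt hc') hc'
    simp only [hF] at h
    simpa using h
  rcases lt_or_gt_of_ne hc with hneg | hpos
  · have e1 := Phi_neg (a + c)
    have e2 := Phi_neg (a - c)
    have h2 := key (-c) (by linarith)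
    rw [show a - -c = a + c by ring, show -a - -c = -(a - c) by ring] at h2
    rw [show -a - c = -(a + c) by ring]
    linarith
  · exact key c hpos

/- moments -/

lemma integrable_phi_mul_id : Integrable (fun x => phi x * x) := by
  have h := integrable_mul_exp_neg_mul_sq (b := (1:ℝ)/2) (by norm_num)
  have h2 := h.const_mul (Real.sqrt (2 * π))⁻¹
  refine h2.congr (ae_of_all _ fun x => ?_)
  simp only [exparg, phi_def]
  ring

lemma integrable_sq_mul_exp : Integrable (fun x : ℝ => x ^ 2 * rexp (-x ^ 2 / 2)) := by
  have h := integrable_rpow_mul_exp_neg_mul_sq (b := (1:ℝ)/2) (by norm_num) (s := 2)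
    (by norm_num)
  refine h.congr (ae_of_all _ fun x => ?_)
  simp only [exparg]
  rw [show (2:ℝ) = ((2:ℕ):ℝ) by norm_num, Real.rpow_natCast]
  try norm_num

lemma integrable_phi_mul_sq : Integrable (fun x => phi x * x ^ 2) := by
  have h2 := integrable_sq_mul_exp.const_mul (Real.sqrt (2 * π))⁻¹
  refine h2.congr (ae_of_all _ fun x => ?_)
  simp only [phi_def]
  ring

lemma tendsto_sq_atTop : Tendsto (fun x : ℝ => x ^ 2) atTop atTop :=
  tendsto_pow_atTop two_ne_zero

lemma tendsto_exp_neg_sq_atTop : Tendsto (fun x : ℝ => rexp (-x ^ 2 / 2)) atTop (nhds 0) := by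
  apply Real.tendsto_exp_atBot.comp
  have h : Tendsto (fun x : ℝ => -x ^ 2) atTop atBot :=
    tendsto_neg_atBot_iff.mpr tendsto_sq_atTop
  exact h.atBot_div_const (by norm_num : (0:ℝ) < 2)

lemma tendsto_exp_neg_sq_atBot : Tendsto (fun x : ℝ => rexp (-x ^ 2 / 2)) atBot (nhds 0) := by
  have h := tendsto_exp_neg_sq_atTop.comp tendsto_neg_atBot_atTop
  refine h.congr fun x => ?_
  simp [Function.comp, neg_sq]

lemma tendsto_mul_exp_neg_sq_atTop :
    Tendsto (fun x : ℝ => x * rexp (-x ^ 2 / 2)) atTop (nhds 0) := by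
  have h := rpow_mul_exp_neg_mul_sq_isLittleO_exp_neg (b := (1:ℝ)/2) (by norm_num) 1
  have h2 : Tendsto (fun x : ℝ => rexp (-((1:ℝ)/2) * x)) atTop (nhds 0) := by
    apply Real.tendsto_exp_atBot.comp
    have hh : Tendsto (fun x : ℝ => (1/2 : ℝ) * x) atTop atTop :=
      tendsto_id.const_mul_atTop (by norm_num)
    have hneg := tendsto_neg_atBot_iff.mpr hh
    refine hneg.congr fun x => ?_
    ring
  have h3 := h.isBigO.trans_tendsto h2
  refine h3.congr fun x => ?_
  rw [Real.rpow_one]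
  congr 1
  ring

lemma tendsto_mul_exp_neg_sq_atBot :
    Tendsto (fun x : ℝ => x * rexp (-x ^ 2 / 2)) atBot (nhds 0) := by
  have h := (tendsto_mul_exp_neg_sq_atTop.comp tendsto_neg_atBot_atTop).neg
  rw [neg_zero] at h
  refine h.congr fun x => ?_
  simp [Function.comp, neg_sq]

lemma integral_exp_neg_sq : ∫ x : ℝ, rexp (-x ^ 2 / 2) = Real.sqrt (2 * π) := by
  have h := integral_gaussian ((1:ℝ)/2)
  rw [show π / ((1:ℝ)/2) = 2 * π by ring] at h
  rw [← h]
  simp only [exparg]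

lemma hasDerivAt_negexp (x : ℝ) : HasDerivAt (fun y : ℝ => -rexp (-y ^ 2 / 2))
    (x * rexp (-x ^ 2 / 2)) x := by
  have h1 : HasDerivAt (fun y : ℝ => -y ^ 2 / 2) (-x) x := by
    have h := ((hasDerivAt_pow 2 x).neg).div_const 2
    convert h using 1
    · rfl
    · rfl
    simp
    try ring
  have h2 := (Real.hasDerivAt_exp (-x ^ 2 / 2)).comp x h1
  have h3 := h2.neg
  convert h3 using 1
  · rfl
  · rfl
  · rfl
  simp [Function.comp]
  try ring

lemma integrable_id_mul_exp : Integrable (fun x : ℝ => x * rexp (-x ^ 2 / 2)) := by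
  refine (integrable_mul_exp_neg_mul_sq (b := (1:ℝ)/2) (by norm_num)).congr
    (ae_of_all _ fun x => ?_)
  simp only [exparg]

lemma integral_phi_mul_id : ∫ x : ℝ, phi x * x = 0 := by
  have h0 := integral_of_hasDerivAt_of_tendsto hasDerivAt_negexp integrable_id_mul_exp
    (tendsto_exp_neg_sq_atBot.neg) (tendsto_exp_neg_sq_atTop.neg)
  simp only [neg_zero, sub_zero] at h0
  have heq : ∫ x : ℝ, phi x * x = (Real.sqrt (2 * π))⁻¹ * ∫ x : ℝ, x * rexp (-x ^ 2 / 2) := by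
    rw [← integral_const_mul]
    congr 1; funext x; rw [phi_def]; ring
  rw [heq, h0]; simp

lemma integrable_exp_neg_sq' : Integrable (fun x : ℝ => rexp (-x ^ 2 / 2)) := by
  refine (integrable_exp_neg_mul_sq (b := (1:ℝ)/2) (by norm_num)).congr
    (ae_of_all _ fun x => ?_)
  simp only [exparg]

lemma hasDerivAt_negidexp (x : ℝ) : HasDerivAt (fun y : ℝ => -(y * rexp (-y ^ 2 / 2)))
    (x ^ 2 * rexp (-x ^ 2 / 2) - rexp (-x ^ 2 / 2)) x := by
  have h1 : HasDerivAt (fun y : ℝ => -y ^ 2 / 2) (-x) x := by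
    have h := ((hasDerivAt_pow 2 x).neg).div_const 2
    convert h using 1
    · rfl
    · rfl
    simp
    try ring
  have hexp := (Real.hasDerivAt_exp (-x ^ 2 / 2)).comp x h1
  have h2 := ((hasDerivAt_id x).mul hexp).neg
  convert h2 using 1
  · rfl
  · rfl
  · rfl
  simp [Function.comp]
  try ring

lemma integral_phi_mul_sq : ∫ x : ℝ, phi x * x ^ 2 = 1 := by
  have hint : Integrable (fun x : ℝ => x ^ 2 * rexp (-x ^ 2 / 2) - rexp (-x ^ 2 / 2)) :=
    integrable_sq_mul_exp.sub integrable_exp_neg_sq'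
  have h0 := integral_of_hasDerivAt_of_tendsto hasDerivAt_negidexp hint
    (tendsto_mul_exp_neg_sq_atBot.neg) (tendsto_mul_exp_neg_sq_atTop.neg)
  simp only [neg_zero, sub_zero] at h0
  rw [integral_sub integrable_sq_mul_exp integrable_exp_neg_sq'] at h0
  have hval : ∫ x : ℝ, x ^ 2 * rexp (-x ^ 2 / 2) = Real.sqrt (2 * π) := by
    have := sub_eq_zero.mp h0
    rw [this, integral_exp_neg_sq]
  have heq : ∫ x : ℝ, phi x * x ^ 2
      = (Real.sqrt (2 * π))⁻¹ * ∫ x : ℝ, x ^ 2 * rexp (-x ^ 2 / 2) := by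
    rw [← integral_const_mul]
    congr 1; funext x; rw [phi_def]; ring
  rw [heq, hval, inv_mul_cancel₀ sqrt2pi_pos.ne']

lemma gauss_eq_withDensity :
    gaussianReal 0 1 = volume.withDensity (fun x => ((phi x).toNNReal : ℝ≥0∞)) := by
  rw [gaussianReal_of_var_ne_zero 0 one_ne_zero]
  congr 1

lemma measurable_phi_toNNReal : Measurable (fun x => (phi x).toNNReal) :=
  (measurable_gaussianPDFReal 0 1).real_toNNReal

lemma integral_gauss (g : ℝ → ℝ) :
    ∫ x, g x ∂(gaussianReal 0 1) = ∫ x, phi x * g x := by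
  rw [gauss_eq_withDensity, integral_withDensity_eq_integral_smul measurable_phi_toNNReal g]
  congr 1
  funext x
  rw [NNReal.smul_def, Real.coe_toNNReal _ (phi_pos x).le, smul_eq_mul]

lemma integrable_gauss_iff (g : ℝ → ℝ) :
    Integrable g (gaussianReal 0 1) ↔ Integrable (fun x => phi x * g x) volume := by
  rw [gauss_eq_withDensity]
  have base := integrable_withDensity_iff_integrable_smul (μ := volume)
    measurable_phi_toNNReal (g := g)
  have heq : (fun x => (phi x).toNNReal • g x) = fun x => phi x * g x := by
    funext x
    rw [NNReal.smul_def, Real.coe_toNNReal _ (phi_pos x).le, smul_eq_mul]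
  rw [heq] at base
  exact base

lemma ennreal_div_tendsto {u : ℕ → ℝ≥0∞} {c b : ℝ≥0∞} (hc : c ≠ ∞)
    (hu : Tendsto u atTop (nhds b)) :
    Tendsto (fun M => c / u M) atTop (nhds (c / b)) := by
  simp only [div_eq_mul_inv]
  exact ENNReal.Tendsto.const_mul (ENNReal.tendsto_inv_iff.2 hu) (Or.inr hc)

lemma slln_gauss {Ω : Type*} [MeasurableSpace Ω] (P : Measure Ω) [IsProbabilityMeasure P]
    (J ξ : ℕ → Ω → ℝ) (hξm : ∀ m, Measurable (ξ m))
    (hξlaw : ∀ m, P.map (ξ m) = gaussianReal 0 1)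
    (hindep : ProbabilityTheory.iIndepFun
      (Sum.elim J ξ) P)
    (g : ℝ → ℝ) (hg : Measurable g)
    (hgint : Integrable (fun x => phi x * g x) volume) :
    ∀ᵐ ω ∂P, Tendsto (fun M : ℕ => (∑ k ∈ Finset.range M, g (ξ k ω)) / M) atTop
      (nhds (∫ x, phi x * g x)) := by
  have hint : Integrable (fun ω => g (ξ 0 ω)) P := by
    have h1 : Integrable g (P.map (ξ 0)) := by
      rw [hξlaw 0]; exact (integrable_gauss_iff g).2 hgint
    exact (integrable_map_measure hg.aestronglyMeasurable (hξm 0).aemeasurable).mp h1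
  have hpair : Pairwise (Function.onFun (IndepFun · · P) fun k ω => g (ξ k ω)) := by
    intro i j hij
    have h := hindep.indepFun (show (Sum.inr i : ℕ ⊕ ℕ) ≠ Sum.inr j by simp [hij])
    exact h.comp hg hg
  have hident : ∀ i, IdentDistrib (fun ω => g (ξ i ω)) (fun ω => g (ξ 0 ω)) P P := by
    intro i
    refine ⟨(hg.comp (hξm i)).aemeasurable, (hg.comp (hξm 0)).aemeasurable, ?_⟩
    have e : ∀ k, P.map (fun ω => g (ξ k ω)) = (gaussianReal 0 1).map g := by
      intro k
      rw [← hξlaw k]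
      exact (Measure.map_map hg (hξm k)).symm
    rw [e i, e 0]
  have h := strong_law_ae_real (fun k ω => g (ξ k ω)) hint hpair hident
  have hexp : (∫ ω, g (ξ 0 ω) ∂P) = ∫ x, phi x * g x := by
    rw [← integral_map (hξm 0).aemeasurable hg.aestronglyMeasurable, hξlaw 0, integral_gauss g]
  rw [hexp] at h
  exact h

end CPAux

set_option maxHeartbeats 2000000 in
open CPAux in
/-- In the two-group model, for a coordinate with mean shift `θ`, the compound
p-value `P_M` converges in distribution to the Oracle p-value `P^or` as `M → ∞`, where weak
convergence of the laws on `ℝ≥0∞` is expressed through integrals of bounded continuous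
test functions. -/
theorem compound_pvalue_tendsto_oracle_inDistribution
    {Ω : Type*} [MeasurableSpace Ω] (P : Measure Ω) [IsProbabilityMeasure P]
    (p θ l ε : ℝ) (hp : p ∈ Ioc (0:ℝ) 1) (hθ : θ ≠ 0) (hl : l ∈ Ioc (0:ℝ) 1)
    (hε : 0 < ε)
    (J ξ : ℕ → Ω → ℝ)
    (hJm : ∀ m, Measurable (J m)) (hξm : ∀ m, Measurable (ξ m))
    (hJvals : ∀ m ω, J m ω = 0 ∨ J m ω = 1)
    (hJlaw : ∀ m, P {ω | J m ω = 1} = ENNReal.ofReal p)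
    (hξlaw : ∀ m, P.map (ξ m) = gaussianReal 0 1)
    (hindep : ProbabilityTheory.iIndepFun
      (Sum.elim J ξ) P)
    (Y : ℕ → Ω → ℝ) (hY : ∀ m ω, Y m ω = l ^ 2 * θ * J m ω + l * ξ m ω)
    (A : ℝ) (hA : A = Phi (ε / l) - Phi (-ε / l))
    (phat : ℕ → Ω → ℝ)
    (hphat : ∀ (M : ℕ) (ω : Ω), phat M ω =
      1 - (1 / ((M : ℝ) * A)) *
        ∑ k ∈ Finset.range M, (Icc (-ε) ε).indicator (fun _ => (1:ℝ)) (Y k ω))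
    (Ybar : ℕ → Ω → ℝ)
    (hYbar : ∀ (M : ℕ) (ω : Ω), Ybar M ω =
      (1 / (M : ℝ)) * ∑ k ∈ Finset.range M, Y k ω)
    (thetahat : ℕ → Ω → ℝ)
    (hthetahat : ∀ (M : ℕ) (ω : Ω), thetahat M ω = Ybar M ω / (l ^ 2 * phat M ω))
    (S2 : ℕ → Ω → ℝ)
    (hS2 : ∀ (M : ℕ) (ω : Ω), S2 M ω =
      (1 / ((M : ℝ) - 1)) * ∑ k ∈ Finset.range M, (Y k ω - Ybar M ω) ^ 2)
    (tauhat2 : ℕ → Ω → ℝ)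
    (htauhat2 : ∀ (M : ℕ) (ω : Ω), tauhat2 M ω =
      max ((S2 M ω - l ^ 2 - Ybar M ω ^ 2 * (1 - phat M ω) / phat M ω) /
        (phat M ω * l ^ 4)) 0)
    (m : ℕ) (hm : ℕ → Ω → ℝ)
    (hhm : ∀ (M : ℕ) (ω : Ω), hm M ω =
      if 0 < tauhat2 M ω then
        Phi (-(Y m ω * tauhat2 M ω + thetahat M ω) /
          Real.sqrt (tauhat2 M ω * (l ^ 2 * tauhat2 M ω + 1)))
      else if thetahat M ω ≤ 0 then 1 else 0)
    (hJ1 : ∀ᵐ ω ∂P, J m ω = 1)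
    (Z : Ω → ℝ) (hZmeas : Measurable Z)
    (hZlaw : P.map Z = gaussianReal (Real.sqrt (1 - l ^ 2) * θ) 1)
    (hZindep : IndepFun Z (fun ω (k : ℕ) => Y k ω) P)
    (PM : ℕ → Ω → ℝ≥0∞)
    (hPM : ∀ (M : ℕ) (ω : Ω), PM M ω =
      min (ENNReal.ofReal (Phi (Z ω)) / ENNReal.ofReal (hm M ω))
        (ENNReal.ofReal (1 - Phi (Z ω)) / ENNReal.ofReal (1 - hm M ω)))
    (Por : Ω → ℝ≥0∞)
    (hPor : ∀ ω : Ω, Por ω =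
      min (ENNReal.ofReal (Phi (Z ω)) / (if θ ≤ 0 then 1 else 0))
        (ENNReal.ofReal (1 - Phi (Z ω)) / (if θ ≤ 0 then 0 else 1))) :
    ∀ f : BoundedContinuousFunction ℝ≥0∞ ℝ,
      Tendsto (fun M : ℕ => ∫ ω, f (PM M ω) ∂P) atTop (nhds (∫ ω, f (Por ω) ∂P)) := by
  classical
  intro f
  have hl0 : 0 < l := hl.1
  have hl0' : l ≠ 0 := hl0.ne'
  -- constants
  set μ0 : ℝ := l ^ 2 * θ with hμ0
  set lo : ℝ := (-ε - μ0) / l with hlo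
  set hi : ℝ := (ε - μ0) / l with hhi
  set B : ℝ := Phi hi - Phi lo with hB
  have hlohi : lo ≤ hi := by
    rw [hlo, hhi, div_le_div_iff₀ hl0 hl0]
    nlinarith
  have hA' : A = Phi (ε / l) - Phi (-(ε / l)) := by rw [hA, neg_div]
  have hApos : 0 < A := by
    rw [hA']
    have h := strictMono_Phi (show -(ε / l) < ε / l by
      have : 0 < ε / l := div_pos hε hl0
      linarith)
    linarith
  have hBA : B < A := by
    rw [hB, hA']
    have hhi' : hi = ε / l - l * θ := by rw [hhi, hμ0]; field_simp
    have hlo' : lo = -(ε / l) - l * θ := by rw [hlo, hμ0]; field_simp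
    rw [hhi', hlo']
    exact shifted_mass_lt (div_pos hε hl0) (mul_ne_zero hl0' hθ)
  have hB0 : 0 ≤ B := by
    rw [hB]
    rcases eq_or_lt_of_le hlohi with h | h
    · rw [h]; simp
    · linarith [strictMono_Phi h]
  set pinf : ℝ := 1 - B / A with hpinf
  have hpinfpos : 0 < pinf := by
    rw [hpinf, sub_pos, div_lt_one hApos]; exact hBA
  have hpinfle : pinf ≤ 1 := by
    have : 0 ≤ B / A := div_nonneg hB0 hApos.le
    rw [hpinf]; linarith
  set θinf : ℝ := μ0 / (l ^ 2 * pinf) with hθinf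
  have hlppos : 0 < l ^ 2 * pinf := by positivity
  -- p = 1 and all J's are a.s. 1
  have haeJ : ∀ k, ∀ᵐ ω ∂P, J k ω = 1 := by
    have hp1 : ENNReal.ofReal p = 1 := by
      rw [← hJlaw m]
      have h0 : P {ω | ¬ J m ω = 1} = 0 := by rw [← ae_iff]; exact hJ1
      have hms : MeasurableSet {ω | J m ω = 1} := hJm m (measurableSet_singleton 1)
      apply (prob_compl_eq_zero_iff hms).1
      convert h0 using 2
      rfl
    intro k
    have hk : P {ω | J k ω = 1} = 1 := by rw [hJlaw k, hp1]
    have hms : MeasurableSet {ω | J k ω = 1} := hJm k (measurableSet_singleton 1)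
    have h0 := (prob_compl_eq_zero_iff hms).2 hk
    rw [ae_iff]
    convert h0 using 2
    rfl
  have hJall : ∀ᵐ ω ∂P, ∀ k, J k ω = 1 := ae_all_iff.2 haeJ
  -- the three LLN statements
  set g3 : ℝ → ℝ := (Icc lo hi).indicator (fun _ => (1:ℝ)) with hg3
  have hmemiff : ∀ x : ℝ, (μ0 + l * x ∈ Icc (-ε) ε) ↔ x ∈ Icc lo hi := by
    intro x
    simp only [mem_Icc, hlo, hhi]
    rw [div_le_iff₀ hl0, le_div_iff₀ hl0]
    constructor <;> rintro ⟨h1, h2⟩ <;> constructor <;> linarith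
  have hindrw : ∀ x : ℝ,
      (Icc (-ε) ε).indicator (fun _ => (1:ℝ)) (μ0 + l * x) = g3 x := by
    intro x
    rw [hg3, Set.indicator_apply, Set.indicator_apply, if_congr (hmemiff x) rfl rfl]
  have hI3 : (∫ x, phi x * g3 x) = B := by
    have hfe : (fun x => phi x * g3 x) = (Icc lo hi).indicator phi := by
      funext x
      rw [hg3, Set.indicator_apply, Set.indicator_apply]
      split <;> simp
    rw [hfe, integral_indicator measurableSet_Icc, integral_Icc_eq_integral_Ioc,
      ← intervalIntegral.integral_of_le hlohi, ← Phi_intervalIntegral, hB]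
  have hg3int : Integrable (fun x => phi x * g3 x) volume := by
    have hfe : (fun x => phi x * g3 x) = (Icc lo hi).indicator phi := by
      funext x
      rw [hg3, Set.indicator_apply, Set.indicator_apply]
      split <;> simp
    rw [hfe]
    exact integrable_phi.indicator measurableSet_Icc
  have hlln1 := slln_gauss P J ξ hξm hξlaw hindep (fun x => x) measurable_id
    (by simpa using integrable_phi_mul_id)
  have hlln2 := slln_gauss P J ξ hξm hξlaw hindep (fun x => x ^ 2)
    (measurable_id.pow_const 2) (by simpa using integrable_phi_mul_sq)
  have hlln3 := slln_gauss P J ξ hξm hξlaw hindep g3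
    (measurable_const.indicator measurableSet_Icc) hg3int
  -- pointwise convergence of PM to Por, a.e.
  have hae : ∀ᵐ ω ∂P, Tendsto (fun M => PM M ω) atTop (nhds (Por ω)) := by
    filter_upwards [hlln1, hlln2, hlln3, hJall] with ω hs1 hs2 hs3 hJω
    simp only [integral_phi_mul_id] at hs1
    have hMdiv : Tendsto (fun M : ℕ => (M:ℝ)/M) atTop (nhds 1) := by
      apply tendsto_const_nhds.congr'
      filter_upwards [eventually_ge_atTop 1] with M hM
      have hM0 : (M:ℝ) ≠ 0 := by
        have := Nat.one_le_iff_ne_zero.1 hM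
        exact_mod_cast this
      rw [div_self hM0]
    have hs1' : Tendsto (fun M : ℕ => (∑ k ∈ Finset.range M, ξ k ω) / M) atTop (nhds 0) := hs1
    have hs2' : Tendsto (fun M : ℕ => (∑ k ∈ Finset.range M, (ξ k ω) ^ 2) / M) atTop
        (nhds 1) := by
      have : (∫ x, phi x * (fun x => x ^ 2) x) = 1 := by simpa using integral_phi_mul_sq
      rw [this] at hs2
      exact hs2
    have hs3' : Tendsto (fun M : ℕ => (∑ k ∈ Finset.range M, g3 (ξ k ω)) / M) atTop
        (nhds B) := by rw [hI3] at hs3; exact hs3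
    have hYk : ∀ k, Y k ω = μ0 + l * ξ k ω := fun k => by
      rw [hY k ω, hJω k, hμ0]; ring
    -- Ybar limit
    have hYbarT : Tendsto (fun M => Ybar M ω) atTop (nhds μ0) := by
      have hlim : Tendsto (fun M : ℕ =>
          μ0 * ((M : ℝ) / M) + l * ((∑ k ∈ Finset.range M, ξ k ω) / M)) atTop
          (nhds (μ0 * 1 + l * 0)) := by
        apply Tendsto.add
        · exact hMdiv.const_mul μ0
        · exact hs1'.const_mul l
      have hev : (fun M : ℕ => μ0 * ((M : ℝ) / M) + l * ((∑ k ∈ Finset.range M, ξ k ω) / M))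
          = fun M => Ybar M ω := by
        funext M
        rw [hYbar]
        rw [Finset.sum_congr rfl (fun k _ => hYk k), Finset.sum_add_distrib,
          Finset.sum_const, Finset.card_range, ← Finset.mul_sum]
        rcases eq_or_ne (M : ℝ) 0 with h | h
        · rw [h]; simp
        · field_simp
          ring
      rw [hev] at hlim
      simpa using hlim
    -- mean square limit
    have hsqT : Tendsto (fun M : ℕ => (∑ k ∈ Finset.range M, (Y k ω) ^ 2) / M) atTop
        (nhds (μ0 ^ 2 + l ^ 2)) := by
      have hlim : Tendsto (fun M : ℕ =>
          μ0 ^ 2 * ((M : ℝ) / M) + 2 * μ0 * l * ((∑ k ∈ Finset.range M, ξ k ω) / M)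
            + l ^ 2 * ((∑ k ∈ Finset.range M, (ξ k ω) ^ 2) / M)) atTop
          (nhds (μ0 ^ 2 * 1 + 2 * μ0 * l * 0 + l ^ 2 * 1)) := by
        refine Tendsto.add (Tendsto.add ?_ ?_) ?_
        · exact hMdiv.const_mul (μ0 ^ 2)
        · exact hs1'.const_mul _
        · exact hs2'.const_mul _
      have hev : (fun M : ℕ =>
          μ0 ^ 2 * ((M : ℝ) / M) + 2 * μ0 * l * ((∑ k ∈ Finset.range M, ξ k ω) / M)
            + l ^ 2 * ((∑ k ∈ Finset.range M, (ξ k ω) ^ 2) / M))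
          = fun M : ℕ => (∑ k ∈ Finset.range M, (Y k ω) ^ 2) / M := by
        funext M
        rw [Finset.sum_congr rfl (fun k _ => by rw [hYk k] :
          ∀ k ∈ Finset.range M, (Y k ω) ^ 2 = (μ0 + l * ξ k ω) ^ 2)]
        rw [Finset.sum_congr rfl (fun k _ => by ring :
          ∀ k ∈ Finset.range M, (μ0 + l * ξ k ω) ^ 2
            = μ0 ^ 2 + 2 * μ0 * l * ξ k ω + l ^ 2 * (ξ k ω) ^ 2)]
        rw [Finset.sum_add_distrib, Finset.sum_add_distrib, Finset.sum_const,
          Finset.card_range, ← Finset.mul_sum, ← Finset.mul_sum]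
        rcases eq_or_ne (M : ℝ) 0 with h | h
        · rw [h]; simp
        · field_simp; ring
      rw [hev] at hlim
      have : μ0 ^ 2 * 1 + 2 * μ0 * l * 0 + l ^ 2 * 1 = μ0 ^ 2 + l ^ 2 := by ring
      rwa [this] at hlim
    -- S2 limit
    have hMM : Tendsto (fun M : ℕ => (M : ℝ) / ((M : ℝ) - 1)) atTop (nhds 1) := by
      have hinv : Tendsto (fun M : ℕ => ((M : ℝ) - 1)⁻¹) atTop (nhds 0) := by
        apply Tendsto.inv_tendsto_atTop
        apply tendsto_atTop_add_const_right
        exact tendsto_natCast_atTop_atTop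
      have hlim : Tendsto (fun M : ℕ => 1 + ((M : ℝ) - 1)⁻¹) atTop (nhds (1 + 0)) :=
        hinv.const_add 1
      rw [add_zero] at hlim
      apply hlim.congr'
      filter_upwards [eventually_ge_atTop 2] with M hM
      have hM1 : (M : ℝ) - 1 ≠ 0 := by
        have : (2 : ℝ) ≤ (M : ℝ) := by exact_mod_cast hM
        linarith
      field_simp
      ring
    have hS2T : Tendsto (fun M => S2 M ω) atTop (nhds (l ^ 2)) := by
      have hlim : Tendsto (fun M : ℕ => ((M : ℝ) / ((M : ℝ) - 1)) *
          ((∑ k ∈ Finset.range M, (Y k ω) ^ 2) / M - (Ybar M ω) ^ 2)) atTop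
          (nhds (1 * ((μ0 ^ 2 + l ^ 2) - μ0 ^ 2))) :=
        hMM.mul (hsqT.sub (hYbarT.pow 2))
      have heq : 1 * ((μ0 ^ 2 + l ^ 2) - μ0 ^ 2) = l ^ 2 := by ring
      rw [heq] at hlim
      apply hlim.congr'
      filter_upwards [eventually_ge_atTop 2] with M hM
      have hM2 : (2 : ℝ) ≤ (M : ℝ) := by exact_mod_cast hM
      have hM0 : (M : ℝ) ≠ 0 := by linarith
      have hM1 : (M : ℝ) - 1 ≠ 0 := by linarith
      rw [hS2]
      have hsum : ∑ k ∈ Finset.range M, (Y k ω - Ybar M ω) ^ 2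
          = (∑ k ∈ Finset.range M, (Y k ω) ^ 2) - (M : ℝ) * (Ybar M ω) ^ 2 := by
        have hS : ∑ k ∈ Finset.range M, Y k ω = (M : ℝ) * Ybar M ω := by
          rw [hYbar]; field_simp
        rw [Finset.sum_congr rfl (fun k _ => by ring :
          ∀ k ∈ Finset.range M, (Y k ω - Ybar M ω) ^ 2
            = (Y k ω) ^ 2 - 2 * Ybar M ω * Y k ω + (Ybar M ω) ^ 2)]
        rw [Finset.sum_add_distrib, Finset.sum_sub_distrib, ← Finset.mul_sum, hS,
          Finset.sum_const, Finset.card_range]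
        push_cast
        ring
      rw [hsum]
      field_simp
    -- phat limit
    have hphatT : Tendsto (fun M => phat M ω) atTop (nhds pinf) := by
      have hlim : Tendsto (fun M : ℕ =>
          1 - (1 / A) * ((∑ k ∈ Finset.range M, g3 (ξ k ω)) / M)) atTop
          (nhds (1 - (1 / A) * B)) := ((hs3'.const_mul (1 / A)).const_sub 1)
      have heq : 1 - (1 / A) * B = pinf := by rw [hpinf]; ring
      rw [heq] at hlim
      apply hlim.congr
      intro M
      rw [hphat]
      rw [Finset.sum_congr rfl (fun k _ => by rw [hYk k]; exact hindrw (ξ k ω) :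
        ∀ k ∈ Finset.range M, (Icc (-ε) ε).indicator (fun _ => (1:ℝ)) (Y k ω)
          = g3 (ξ k ω))]
      ring
    -- thetahat limit
    have hθT : Tendsto (fun M => thetahat M ω) atTop (nhds θinf) := by
      have hlim := hYbarT.div (hphatT.const_mul (l ^ 2)) (by rw [hθinf] at *; positivity)
      refine Tendsto.congr (fun M => (hthetahat M ω).symm) ?_
      rw [hθinf]
      exact hlim
    -- tauhat2 limit
    have hτT : Tendsto (fun M => tauhat2 M ω) atTop (nhds 0) := by
      set L : ℝ := (l ^ 2 - l ^ 2 - μ0 ^ 2 * (1 - pinf) / pinf) / (pinf * l ^ 4) with hL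
      have hlim : Tendsto (fun M : ℕ =>
          (S2 M ω - l ^ 2 - (Ybar M ω) ^ 2 * (1 - phat M ω) / phat M ω)
            / (phat M ω * l ^ 4)) atTop (nhds L) := by
        apply Tendsto.div
        · apply Tendsto.sub (hS2T.sub tendsto_const_nhds)
          exact Tendsto.div ((hYbarT.pow 2).mul (hphatT.const_sub 1)) hphatT hpinfpos.ne'
        · exact hphatT.mul_const (l ^ 4)
        · positivity
      have hLle : L ≤ 0 := by
        rw [hL]
        apply div_nonpos_of_nonpos_of_nonneg
        · have h1 : 0 ≤ μ0 ^ 2 * (1 - pinf) / pinf := by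
            apply div_nonneg _ hpinfpos.le
            apply mul_nonneg (sq_nonneg _)
            linarith
          linarith
        · positivity
      have hmax := hlim.max (tendsto_const_nhds (x := (0:ℝ)))
      rw [max_eq_right hLle] at hmax
      exact Tendsto.congr (fun M => (htauhat2 M ω).symm) hmax
    have hτ0 : ∀ M, 0 ≤ tauhat2 M ω := fun M => by
      rw [htauhat2]; exact le_max_right _ _
    -- hm limit
    have hhmT : Tendsto (fun M => hm M ω) atTop
        (nhds (if θ ≤ 0 then (1:ℝ) else 0)) := by
      have hdenT : Tendsto (fun M => Real.sqrt (tauhat2 M ω * (l ^ 2 * tauhat2 M ω + 1)))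
          atTop (nhds 0) := by
        have h0 : Tendsto (fun M => tauhat2 M ω * (l ^ 2 * tauhat2 M ω + 1)) atTop
            (nhds (0 * (l ^ 2 * 0 + 1))) :=
          hτT.mul ((hτT.const_mul (l ^ 2)).add_const 1)
        rw [show (0:ℝ) * (l ^ 2 * 0 + 1) = 0 by ring] at h0
        have := h0.sqrt
        rwa [Real.sqrt_zero] at this
      rcases lt_or_gt_of_ne hθ with hθneg | hθpos
      · -- θ < 0, hm → 1
        rw [if_pos hθneg.le]
        have hθinfneg : θinf < 0 := by
          rw [hθinf, hμ0]
          apply div_neg_of_neg_of_pos _ hlppos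
          nlinarith
        rw [Metric.tendsto_atTop]
        intro δ hδ
        obtain ⟨b0, hb0⟩ := eventually_atTop.1
          (tendsto_Phi_atTop.eventually (eventually_gt_nhds (show 1 - δ < 1 by linarith)))
        set C : ℝ := max 1 b0 with hC
        have hCpos : (0:ℝ) < C := lt_of_lt_of_le one_pos (le_max_left _ _)
        set n0 : ℝ := -θinf / 4 with hn0
        have hn0pos : 0 < n0 := by rw [hn0]; linarith
        have E1 := hθT.eventually_le_const (show θinf < θinf / 2 by linarith)
        have hτT' : Tendsto (fun M => |Y m ω| * tauhat2 M ω) atTop (nhds 0) := by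
          simpa using hτT.const_mul |Y m ω|
        have E2' := hτT'.eventually_le_const hn0pos
        have E3 := hdenT.eventually_le_const (show (0:ℝ) < n0 / C by positivity)
        obtain ⟨N, hN⟩ := eventually_atTop.1 (E1.and (E2'.and E3))
        refine ⟨N, fun M hM => ?_⟩
        obtain ⟨h1', h2', h3'⟩ := hN M hM
        rw [hhm M ω]
        rw [Real.dist_eq]
        split_ifs with hτpos hθh
        · -- tauhat2 > 0
          set d := Real.sqrt (tauhat2 M ω * (l ^ 2 * tauhat2 M ω + 1)) with hd
          have hdpos : 0 < d := by
            rw [hd]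
            apply Real.sqrt_pos.2
            have : (0:ℝ) < l ^ 2 * tauhat2 M ω + 1 := by positivity
            positivity
          have hnum : Y m ω * tauhat2 M ω + thetahat M ω ≤ -n0 := by
            have habs : Y m ω * tauhat2 M ω ≤ |Y m ω| * tauhat2 M ω := by
              have h1 : Y m ω * tauhat2 M ω ≤ |Y m ω * tauhat2 M ω| := le_abs_self _
              rwa [abs_mul, abs_of_nonneg (hτ0 M)] at h1
            have : thetahat M ω ≤ θinf / 2 := h1'
            rw [hn0]
            linarith
          have harg : C ≤ -(Y m ω * tauhat2 M ω + thetahat M ω) / d := by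
            rw [le_div_iff₀ hdpos]
            have h4 : C * d ≤ C * (n0 / C) := mul_le_mul_of_nonneg_left h3' hCpos.le
            rw [mul_div_cancel₀ _ hCpos.ne'] at h4
            linarith
          have hb : b0 ≤ -(Y m ω * tauhat2 M ω + thetahat M ω) / d :=
            le_trans (le_trans (le_max_right 1 b0) harg) le_rfl
          have hPhi := hb0 _ hb
          have hle1 := Phi_le_one (-(Y m ω * tauhat2 M ω + thetahat M ω) / d)
          rw [abs_sub_comm]
          rw [abs_of_nonneg (show (0:ℝ) ≤
            1 - Phi (-(Y m ω * tauhat2 M ω + thetahat M ω) / d) by linarith)]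
          linarith
        · simp [abs_of_nonneg, hδ]
        · -- tauhat2 = 0, thetahat > 0: contradiction with thetahat ≤ θinf/2 < 0
          exfalso
          have : thetahat M ω ≤ θinf / 2 := h1'
          have : thetahat M ω ≤ 0 := by linarith
          exact hθh this
      · -- θ > 0, hm → 0
        rw [if_neg (by linarith)]
        have hθinfpos : 0 < θinf := by
          rw [hθinf, hμ0]
          apply div_pos _ hlppos
          nlinarith
        rw [Metric.tendsto_atTop]
        intro δ hδ
        obtain ⟨b0, hb0⟩ := eventually_atBot.1
          (tendsto_Phi_atBot.eventually (eventually_lt_nhds hδ))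
        set C : ℝ := max 1 (-b0) with hC
        have hCpos : (0:ℝ) < C := lt_of_lt_of_le one_pos (le_max_left _ _)
        have hCb : -C ≤ b0 := by
          have := le_max_right 1 (-b0)
          linarith
        set n0 : ℝ := θinf / 4 with hn0
        have hn0pos : 0 < n0 := by rw [hn0]; linarith
        have E1 := hθT.eventually (eventually_ge_nhds (show θinf / 2 < θinf by linarith))
        have hτT' : Tendsto (fun M => |Y m ω| * tauhat2 M ω) atTop (nhds 0) := by
          simpa using hτT.const_mul |Y m ω|
        have E2' := hτT'.eventually_le_const hn0pos
        have E3 := hdenT.eventually_le_const (show (0:ℝ) < n0 / C by positivity)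
        obtain ⟨N, hN⟩ := eventually_atTop.1 (E1.and (E2'.and E3))
        refine ⟨N, fun M hM => ?_⟩
        obtain ⟨h1', h2', h3'⟩ := hN M hM
        rw [hhm M ω, Real.dist_eq]
        split_ifs with hτpos hθh
        · set d := Real.sqrt (tauhat2 M ω * (l ^ 2 * tauhat2 M ω + 1)) with hd
          have hdpos : 0 < d := by
            rw [hd]
            apply Real.sqrt_pos.2
            have : (0:ℝ) < l ^ 2 * tauhat2 M ω + 1 := by positivity
            positivity
          have hnum : n0 ≤ Y m ω * tauhat2 M ω + thetahat M ω := by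
            have habs : -(|Y m ω| * tauhat2 M ω) ≤ Y m ω * tauhat2 M ω := by
              have h1 : -|Y m ω * tauhat2 M ω| ≤ Y m ω * tauhat2 M ω := neg_abs_le _
              rwa [abs_mul, abs_of_nonneg (hτ0 M)] at h1
            have : θinf / 2 ≤ thetahat M ω := h1'
            rw [hn0]
            linarith
          have harg : -(Y m ω * tauhat2 M ω + thetahat M ω) / d ≤ -C := by
            rw [div_le_iff₀ hdpos]
            have h4 : C * d ≤ C * (n0 / C) := mul_le_mul_of_nonneg_left h3' hCpos.le
            rw [mul_div_cancel₀ _ hCpos.ne'] at h4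
            linarith
          have hPhi := hb0 _ (le_trans harg hCb)
          rw [sub_zero, abs_of_nonneg (Phi_nonneg _)]
          exact hPhi
        · -- tauhat2 = 0, thetahat ≤ 0: contradiction
          exfalso
          have : θinf / 2 ≤ thetahat M ω := h1'
          linarith
        · simp [hδ]
    -- conclude PM → Por
    have hΦZpos : 0 < Phi (Z ω) := Phi_pos _
    have hΦZlt : Phi (Z ω) < 1 := Phi_lt_one _
    have hc1 : ENNReal.ofReal (Phi (Z ω)) ≠ ∞ := ENNReal.ofReal_ne_top
    have hc2 : ENNReal.ofReal (1 - Phi (Z ω)) ≠ ∞ := ENNReal.ofReal_ne_top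
    rcases le_or_gt θ 0 with hθle | hθpos
    · -- θ ≤ 0 (θ < 0): hm → 1
      have hhm1 : Tendsto (fun M => hm M ω) atTop (nhds 1) := by
        rw [if_pos hθle] at hhmT; exact hhmT
      have hu : Tendsto (fun M => ENNReal.ofReal (hm M ω)) atTop (nhds 1) := by
        have := (ENNReal.continuous_ofReal.tendsto 1).comp hhm1
        simpa [Function.comp_def] using this
      have hv : Tendsto (fun M => ENNReal.ofReal (1 - hm M ω)) atTop (nhds 0) := by
        have h0 : Tendsto (fun M => 1 - hm M ω) atTop (nhds 0) := by
          have := hhm1.const_sub 1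
          simpa using this
        have := (ENNReal.continuous_ofReal.tendsto 0).comp h0
        simpa [Function.comp_def] using this
      have hlim := (ennreal_div_tendsto hc1 hu).min (ennreal_div_tendsto hc2 hv)
      refine Tendsto.congr (fun M => (hPM M ω).symm) ?_
      rw [hPor ω]
      simp only [if_pos hθle]
      exact hlim
    · have hhm0 : Tendsto (fun M => hm M ω) atTop (nhds 0) := by
        rw [if_neg (not_le.2 hθpos)] at hhmT; exact hhmT
      have hu : Tendsto (fun M => ENNReal.ofReal (hm M ω)) atTop (nhds 0) := by
        have := (ENNReal.continuous_ofReal.tendsto 0).comp hhm0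
        simpa [Function.comp_def] using this
      have hv : Tendsto (fun M => ENNReal.ofReal (1 - hm M ω)) atTop (nhds 1) := by
        have h0 : Tendsto (fun M => 1 - hm M ω) atTop (nhds 1) := by
          have := hhm0.const_sub 1
          simpa using this
        have := (ENNReal.continuous_ofReal.tendsto 1).comp h0
        simpa [Function.comp_def] using this
      have hlim := (ennreal_div_tendsto hc1 hu).min (ennreal_div_tendsto hc2 hv)
      refine Tendsto.congr (fun M => (hPM M ω).symm) ?_
      rw [hPor ω]
      simp only [if_neg (not_le.2 hθpos)]
      exact hlim
  -- measurability
  have mY : ∀ k, Measurable (Y k) := fun k => by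
    have he : Y k = fun ω => l ^ 2 * θ * J k ω + l * ξ k ω := funext (hY k)
    rw [he]
    exact ((hJm k).const_mul _).add ((hξm k).const_mul _)
  have mYbar : ∀ M, Measurable (Ybar M) := fun M => by
    have he : Ybar M = fun ω => (1 / (M : ℝ)) * ∑ k ∈ Finset.range M, Y k ω :=
      funext (hYbar M)
    rw [he]
    exact (Finset.measurable_sum _ fun k _ => mY k).const_mul _
  have mphat : ∀ M, Measurable (phat M) := fun M => by
    have he : phat M = fun ω => 1 - (1 / ((M : ℝ) * A)) *
        ∑ k ∈ Finset.range M, (Icc (-ε) ε).indicator (fun _ => (1:ℝ)) (Y k ω) :=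
      funext (hphat M)
    rw [he]
    apply Measurable.const_sub
    apply Measurable.const_mul
    exact Finset.measurable_sum _ fun k _ =>
      (measurable_const.indicator measurableSet_Icc).comp (mY k)
  have mθhat : ∀ M, Measurable (thetahat M) := fun M => by
    have he : thetahat M = fun ω => Ybar M ω / (l ^ 2 * phat M ω) :=
      funext (hthetahat M)
    rw [he]
    exact (mYbar M).div ((mphat M).const_mul _)
  have mS2 : ∀ M, Measurable (S2 M) := fun M => by
    have he : S2 M = fun ω =>
        (1 / ((M : ℝ) - 1)) * ∑ k ∈ Finset.range M, (Y k ω - Ybar M ω) ^ 2 :=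
      funext (hS2 M)
    rw [he]
    exact (Finset.measurable_sum _ fun k _ => ((mY k).sub (mYbar M)).pow_const 2).const_mul _
  have mτ : ∀ M, Measurable (tauhat2 M) := fun M => by
    have he : tauhat2 M = fun ω =>
        max ((S2 M ω - l ^ 2 - Ybar M ω ^ 2 * (1 - phat M ω) / phat M ω) /
          (phat M ω * l ^ 4)) 0 :=
      funext (htauhat2 M)
    rw [he]
    apply Measurable.max _ measurable_const
    apply Measurable.div
    · exact (((mS2 M).sub_const _).sub
        ((((mYbar M).pow_const 2).mul ((mphat M).const_sub 1)).div (mphat M)))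
    · exact (mphat M).mul_const _
  have mhm : ∀ M, Measurable (hm M) := fun M => by
    have he : hm M = fun ω =>
        if 0 < tauhat2 M ω then
          Phi (-(Y m ω * tauhat2 M ω + thetahat M ω) /
            Real.sqrt (tauhat2 M ω * (l ^ 2 * tauhat2 M ω + 1)))
        else if thetahat M ω ≤ 0 then 1 else 0 :=
      funext (hhm M)
    rw [he]
    apply Measurable.ite (measurableSet_lt measurable_const (mτ M))
    · apply continuous_Phi.measurable.comp
      apply Measurable.div
      · exact (((mY m).mul (mτ M)).add (mθhat M)).neg
      · exact Real.continuous_sqrt.measurable.comp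
          (((mτ M).mul (((mτ M).const_mul _).add_const 1)))
    · exact Measurable.ite (measurableSet_le (mθhat M) measurable_const)
        measurable_const measurable_const
  have mPM : ∀ M, Measurable (PM M) := fun M => by
    have he : PM M = fun ω =>
        min (ENNReal.ofReal (Phi (Z ω)) / ENNReal.ofReal (hm M ω))
          (ENNReal.ofReal (1 - Phi (Z ω)) / ENNReal.ofReal (1 - hm M ω)) :=
      funext (hPM M)
    rw [he]
    have mZΦ : Measurable fun ω => ENNReal.ofReal (Phi (Z ω)) :=
      ENNReal.measurable_ofReal.comp (continuous_Phi.measurable.comp hZmeas)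
    have mZΦ' : Measurable fun ω => ENNReal.ofReal (1 - Phi (Z ω)) :=
      ENNReal.measurable_ofReal.comp
        ((continuous_Phi.measurable.comp hZmeas).const_sub 1)
    apply Measurable.min
    · exact mZΦ.div (ENNReal.measurable_ofReal.comp (mhm M))
    · exact mZΦ'.div (ENNReal.measurable_ofReal.comp ((mhm M).const_sub 1))
  -- dominated convergence
  apply tendsto_integral_of_dominated_convergence (fun _ => ‖f‖)
  · exact fun M => (f.continuous.measurable.comp (mPM M)).aestronglyMeasurable
  · exact integrable_const _
  · exact fun M => ae_of_all _ fun ω => f.norm_coe_le_norm _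
  · filter_upwards [hae] with ω hω
    exact (f.continuous.tendsto _).comp hω
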